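/- Let B ∈ [0,∞], b ∈ ℝ², y ∈ D², and let W = (W₁,W₂) be the unique solution of the unreflected auxiliary system W₁(t) = b₁ + y₁(t) + ∫₀ᵗ(−φ₀(W₁)(s) + φ_B(W₂)(s))ds and W₂(t) = b₂ + y₂(t) + ∫₀ᵗ(−φ_B(W₂)(s))ds + ψ₀(W₁)(t). Then for every t ≥ 0, setting K = |b| + ‖y‖_t, one has ‖W₁‖_t ≤ 2Ke^{6t} and ‖W₂‖_t ≤ 4Ke^{6t}. -/

import Mathlib

open MeasureTheory Filter Set
open scoped ENNReal

noncomputable section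

/-- `f` is càdlàg on `[0,∞)`: right-continuous at every `t ≥ 0` and possessing
finite left limits at every `t > 0`.  (Values on `(-∞,0)` are irrelevant.) -/
def Cadlag (f : ℝ → ℝ) : Prop :=
  (∀ t : ℝ, 0 ≤ t → ContinuousWithinAt f (Set.Ici t) t) ∧
    (∀ t : ℝ, 0 < t → ∃ L : ℝ, Filter.Tendsto f (nhdsWithin t (Set.Iio t)) (nhds L))

/-- Uniform norm of `x` on `[0,t]`: `‖x‖_t = sup_{0 ≤ s ≤ t} |x(s)|`. -/
def unif (x : ℝ → ℝ) (t : ℝ) : ℝ := ⨆ s : Set.Icc (0:ℝ) t, |x s.1|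

/-- Regulator of the one-sided reflection map with upper barrier `κ ∈ ℝ`:
`ψ_κ(x)(t) = sup_{0 ≤ s ≤ t} (x(s) - κ)⁺`. -/
def psiR (κ : ℝ) (x : ℝ → ℝ) (t : ℝ) : ℝ := ⨆ s : Set.Icc (0:ℝ) t, max (x s.1 - κ) 0

/-- One-sided reflection map with upper barrier `κ ∈ ℝ`: `φ_κ(x) = x - ψ_κ(x)`. -/
def phiR (κ : ℝ) (x : ℝ → ℝ) (t : ℝ) : ℝ := x t - psiR κ x t

/-- Regulator for a barrier `κ ∈ [0,∞]`; for `κ = ∞` it is identically `0`. -/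
def psiE (κ : ℝ≥0∞) (x : ℝ → ℝ) : ℝ → ℝ := if κ = ⊤ then 0 else psiR κ.toReal x

/-- Reflection map for a barrier `κ ∈ [0,∞]`; for `κ = ∞` it is the identity. -/
def phiE (κ : ℝ≥0∞) (x : ℝ → ℝ) : ℝ → ℝ := if κ = ⊤ then x else phiR κ.toReal x

/-- "`∫ 𝟙_S du = 0`": every Stieltjes function agreeing with the
(constant-below-zero extension of) `u` assigns measure zero to `S`. -/
def ZeroStieltjesOn (u : ℝ → ℝ) (S : Set ℝ) : Prop :=
  ∀ sf : StieltjesFunction ℝ, (∀ t : ℝ, sf t = u (max t 0)) → sf.measure S = 0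

/-- `u₁, u₂` is a valid pair of regulator processes for `x₁` (barrier `0` from above)
and `x₂` (upper barrier `B ∈ [0,∞]`): nondecreasing nonnegative elements of `D` with
`∫₀^∞ 𝟙{x₁(t) < 0} du₁(t) = 0` and `∫₀^∞ 𝟙{x₂(t) < B} du₂(t) = 0`. -/
def IsRegulator (B : ℝ≥0∞) (x₁ x₂ u₁ u₂ : ℝ → ℝ) : Prop :=
  Cadlag u₁ ∧ Cadlag u₂ ∧ MonotoneOn u₁ (Set.Ici 0) ∧ MonotoneOn u₂ (Set.Ici 0) ∧
    (∀ t ≥ (0:ℝ), 0 ≤ u₁ t) ∧ (∀ t ≥ (0:ℝ), 0 ≤ u₂ t) ∧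
    ZeroStieltjesOn u₁ {t | 0 ≤ t ∧ x₁ t < 0} ∧
    ZeroStieltjesOn u₂ {t | 0 ≤ t ∧ ENNReal.ofReal (x₂ t) < B}
/-- `(w₁, w₂)` solves the unreflected auxiliary system with data
`(B, b₁, b₂, y₁, y₂)` (equations (20)-(21) of the paper). -/
def IsAuxSolution (B : ℝ≥0∞) (b₁ b₂ : ℝ) (y₁ y₂ w₁ w₂ : ℝ → ℝ) : Prop :=
  Cadlag w₁ ∧ Cadlag w₂ ∧
  (∀ t ≥ (0:ℝ), w₁ t =
      b₁ + y₁ t + ∫ s in (0:ℝ)..t, (-(phiR 0 w₁ s) + phiE B w₂ s)) ∧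
  (∀ t ≥ (0:ℝ), w₂ t =
      b₂ + y₂ t + psiR 0 w₁ t + ∫ s in (0:ℝ)..t, -(phiE B w₂ s)) ∧
  (∀ t ≥ (0:ℝ), 0 ≤ w₂ t)

/-! On `[0, s]` one has `ψ₀(x) ≤ ‖x‖_s` and `|φ_κ(x)| ≤ 2‖x‖_s` for every barrier `κ ≥ 0`, so the
running sup-norms `F₁ = ‖W₁‖`, `F₂ = ‖W₂‖` satisfy `F₁ ≤ K + 2∫(F₁ + F₂)` and
`F₂ ≤ K + F₁ + 2∫(F₁ + F₂)`. Hence the nondecreasing function `F₁ + F₂` obeys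
`F₁ + F₂ ≤ 3K + 6∫(F₁ + F₂)`, and Grönwall gives `F₁ + F₂ ≤ 3Ke^{6s}`. Substituting this back,
`2∫₀ᵗ(F₁ + F₂) ≤ K(e^{6t} - 1)`, whence `F₁(t) ≤ Ke^{6t}` and `F₂(t) ≤ 2Ke^{6t}`. -/

open Topology

theorem Cadlag.isBoundedUnder_abs {f : ℝ → ℝ} (hf : Cadlag f) {x : ℝ} (hx : 0 ≤ x) :
    IsBoundedUnder (· ≤ ·) (𝓝[Ici 0] x) fun s => |f s| := by
  have hright := (hf.1 x hx).abs.isBoundedUnder_le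
  rcases hx.eq_or_lt with rfl | hx
  · exact hright
  · obtain ⟨L, hL⟩ := hf.2 x hx
    rw [nhdsWithin_eq_nhds.2 (Ici_mem_nhds hx), ← nhdsLT_sup_nhdsGE, IsBoundedUnder, map_sup]
    exact isBounded_sup hL.abs.isBoundedUnder_le hright

theorem Cadlag.bddAbove_abs_image_Icc {f : ℝ → ℝ} (hf : Cadlag f) (t : ℝ) :
    BddAbove ((fun s => |f s|) '' Icc 0 t) := by
  refine isCompact_Icc.induction_on (p := fun S => BddAbove ((fun s => |f s|) '' S))
    (by simp) (fun S T hST hT => hT.mono (image_mono hST))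
    (fun S T hS hT => by simpa only [image_union] using hS.union hT) fun x hx => ?_
  obtain ⟨C, hC⟩ := ((hf.isBoundedUnder_abs hx.1).mono
    (nhdsWithin_mono x Icc_subset_Ici_self))
  exact ⟨{s | |f s| ≤ C}, hC, C, by rintro _ ⟨s, hs, rfl⟩; exact hs⟩

section UniformNorm

variable {x : ℝ → ℝ} {t s : ℝ}

theorem unif_nonneg (x : ℝ → ℝ) (t : ℝ) : 0 ≤ unif x t :=
  Real.iSup_nonneg fun _ => abs_nonneg _

theorem abs_le_unif (hx : BddAbove ((fun u => |x u|) '' Icc 0 t)) (hs : s ∈ Icc 0 t) :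
    |x s| ≤ unif x t :=
  le_ciSup (f := fun u : Icc (0:ℝ) t => |x u|) (by rwa [image_eq_range] at hx) ⟨s, hs⟩

theorem unif_le {C : ℝ} (ht : 0 ≤ t) (h : ∀ s ∈ Icc 0 t, |x s| ≤ C) : unif x t ≤ C :=
  have : Nonempty (Icc (0:ℝ) t) := (nonempty_Icc.2 ht).to_subtype
  ciSup_le fun s => h s s.2

theorem unif_monotoneOn (hx : BddAbove ((fun u => |x u|) '' Icc 0 t)) :
    MonotoneOn (unif x) (Icc 0 t) := fun _ hr _ hr' hrr' =>
  unif_le hr.1 fun _ hs =>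
    abs_le_unif (hx.mono (image_mono (Icc_subset_Icc_right hr'.2))) ⟨hs.1, hs.2.trans hrr'⟩

theorem psiR_nonneg (κ : ℝ) (x : ℝ → ℝ) (t : ℝ) : 0 ≤ psiR κ x t :=
  Real.iSup_nonneg fun _ => le_max_right _ _

theorem psiR_le_unif {κ : ℝ} (hκ : 0 ≤ κ) (hx : BddAbove ((fun u => |x u|) '' Icc 0 t))
    (ht : 0 ≤ t) : psiR κ x t ≤ unif x t :=
  have : Nonempty (Icc (0:ℝ) t) := (nonempty_Icc.2 ht).to_subtype
  ciSup_le fun s => max_le (by linarith [le_abs_self (x s), abs_le_unif hx s.2])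
    (unif_nonneg x t)

theorem abs_phiR_le {κ : ℝ} (hκ : 0 ≤ κ) (hx : BddAbove ((fun u => |x u|) '' Icc 0 t))
    (ht : 0 ≤ t) : |phiR κ x t| ≤ 2 * unif x t := by
  calc |phiR κ x t| ≤ |x t| + |psiR κ x t| := abs_sub _ _
    _ ≤ unif x t + unif x t := by
      rw [abs_of_nonneg (psiR_nonneg κ x t)]
      exact add_le_add (abs_le_unif hx ⟨ht, le_rfl⟩) (psiR_le_unif hκ hx ht)
    _ = 2 * unif x t := by ring

theorem abs_phiE_le (B : ℝ≥0∞) (hx : BddAbove ((fun u => |x u|) '' Icc 0 t)) (ht : 0 ≤ t) :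
    |phiE B x t| ≤ 2 * unif x t := by
  unfold phiE
  split_ifs
  · linarith [abs_le_unif hx ⟨ht, le_rfl⟩, unif_nonneg x t]
  · exact abs_phiR_le ENNReal.toReal_nonneg hx ht

end UniformNorm

theorem MonotoneOn.integral_le_mul {F : ℝ → ℝ} {a b : ℝ} (hF : MonotoneOn F (Icc a b))
    (hab : a ≤ b) : ∫ u in a..b, F u ≤ (b - a) * F b := by
  have := intervalIntegral.integral_mono_on hab (hF.mono (uIcc_of_le hab).le).intervalIntegrable
    (intervalIntegrable_const (μ := volume)) fun u hu => hF hu ⟨hab, le_rfl⟩ hu.2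
  simpa using this

theorem MonotoneOn.le_mul_exp_of_le_add_mul_integral {F : ℝ → ℝ} {a b δ K : ℝ}
    (hF : MonotoneOn F (Icc a b)) (hK : 0 ≤ K)
    (h : ∀ x ∈ Icc a b, F x ≤ δ + K * ∫ u in a..x, F u) :
    ∀ x ∈ Icc a b, F x ≤ δ * Real.exp (K * (x - a)) := by
  intro x hx
  have hab : a ≤ b := hx.1.trans hx.2
  have hFi : IntervalIntegrable F volume a b := (hF.mono (uIcc_of_le hab).le).intervalIntegrable
  have hFi' : ∀ c ∈ Icc a b, IntervalIntegrable F volume a c := fun c hc =>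
    hFi.mono_set (by rw [uIcc_of_le hab, uIcc_of_le hc.1]; exact Icc_subset_Icc_right hc.2)
  set G : ℝ → ℝ := fun x => δ + K * ∫ u in a..x, F u
  have hG : ContinuousOn G (Icc a b) := by
    have := intervalIntegral.continuousOn_primitive_interval' hFi left_mem_uIcc
    rw [uIcc_of_le hab] at this
    exact continuousOn_const.add (continuousOn_const.mul this)
  -- Differential Grönwall for the continuous majorant `G`: as `F` is monotone, the right
  -- difference quotients of `G` at `y` are at most `K * G z` for `z` slightly right of `y`.
  have hslope : ∀ y ∈ Ico a b, ∀ r, K * G y < r →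
      ∃ᶠ z in 𝓝[>] y, (z - y)⁻¹ * (G z - G y) < r := by
    intro y hy r hr
    have hIcc : Icc a b ∈ 𝓝[>] y :=
      mem_of_superset (Ioc_mem_nhdsGT hy.2) (Ioc_subset_Icc_self.trans (Icc_subset_Icc_left hy.1))
    have hlim : ∀ᶠ z in 𝓝[>] y, K * G z < r :=
      ((hG y (Ico_subset_Icc_self hy)).mono_of_mem_nhdsWithin hIcc).const_mul K
        |>.eventually_lt_const hr
    refine ((Filter.Eventually.and (Ioc_mem_nhdsGT hy.2) hlim).mono
      fun z ⟨hz, hzr⟩ => ?_).frequently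
    have hsub : G z - G y = K * ∫ u in y..z, F u := by
      simp only [G]
      rw [← intervalIntegral.integral_interval_sub_left (hFi' z ⟨hy.1.trans hz.1.le, hz.2⟩)
        (hFi' y (Ico_subset_Icc_self hy))]
      ring
    have hFz : ∫ u in y..z, F u ≤ (z - y) * F z :=
      (hF.mono (Icc_subset_Icc hy.1 hz.2)).integral_le_mul hz.1.le
    calc (z - y)⁻¹ * (G z - G y) ≤ K * F z := by
          rw [hsub, inv_mul_le_iff₀ (sub_pos.2 hz.1)]
          linarith [mul_le_mul_of_nonneg_left hFz hK]
      _ ≤ K * G z := mul_le_mul_of_nonneg_left (h z ⟨hy.1.trans hz.1.le, hz.2⟩) hK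
      _ < r := hzr
  have := le_gronwallBound_of_liminf_deriv_right_le (δ := δ) (ε := 0) hG hslope (by simp [G])
    (fun x _ => (add_zero _).ge) x hx
  rw [gronwallBound_ε0] at this
  exact (h x hx).trans this

theorem abs_integral_le_integral_of_abs_le {q g : ℝ → ℝ} {a u s : ℝ}
    (hg : IntervalIntegrable g volume a s) (hq : ∀ v ∈ Icc a s, |q v| ≤ g v)
    (hu : u ∈ Icc a s) : |∫ v in a..u, q v| ≤ ∫ v in a..s, g v := by
  have hg₀ : 0 ≤ᵐ[volume.restrict (Ioc a s)] g := (ae_restrict_iff' measurableSet_Ioc).2 <|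
    ae_of_all _ fun v hv => (abs_nonneg _).trans (hq v (Ioc_subset_Icc_self hv))
  have hsub : uIcc a u ⊆ uIcc a s := by
    rw [uIcc_of_le hu.1, uIcc_of_le (hu.1.trans hu.2)]
    exact Icc_subset_Icc_right hu.2
  calc |∫ v in a..u, q v| ≤ ∫ v in a..u, g v := by
        rw [← Real.norm_eq_abs]
        exact intervalIntegral.norm_integral_le_of_norm_le hu.1
          (ae_of_all _ fun v hv => hq v ⟨hv.1.le, hv.2.trans hu.2⟩) (hg.mono_set hsub)
    _ ≤ ∫ v in a..s, g v := intervalIntegral.integral_mono_interval le_rfl hu.1 hu.2 hg₀ hg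

namespace IsAuxSolution

variable {B : ℝ≥0∞} {b₁ b₂ : ℝ} {y₁ y₂ W₁ W₂ : ℝ → ℝ} {s t K : ℝ}

theorem monotoneOn_unif_add (hsol : IsAuxSolution B b₁ b₂ y₁ y₂ W₁ W₂) (t : ℝ) :
    MonotoneOn (fun u => unif W₁ u + unif W₂ u) (Icc 0 t) :=
  (unif_monotoneOn (hsol.1.bddAbove_abs_image_Icc t)).add
    (unif_monotoneOn (hsol.2.1.bddAbove_abs_image_Icc t))

theorem abs_drift_fst_le (hsol : IsAuxSolution B b₁ b₂ y₁ y₂ W₁ W₂) (hs : 0 ≤ s) :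
    |-(phiR 0 W₁ s) + phiE B W₂ s| ≤ 2 * (unif W₁ s + unif W₂ s) := by
  calc |-(phiR 0 W₁ s) + phiE B W₂ s| ≤ |phiR 0 W₁ s| + |phiE B W₂ s| := by
        simpa only [abs_neg] using abs_add_le (-(phiR 0 W₁ s)) (phiE B W₂ s)
    _ ≤ 2 * unif W₁ s + 2 * unif W₂ s :=
        add_le_add (abs_phiR_le le_rfl (hsol.1.bddAbove_abs_image_Icc s) hs)
          (abs_phiE_le B (hsol.2.1.bddAbove_abs_image_Icc s) hs)
    _ = 2 * (unif W₁ s + unif W₂ s) := by ring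

theorem abs_drift_snd_le (hsol : IsAuxSolution B b₁ b₂ y₁ y₂ W₁ W₂) (hs : 0 ≤ s) :
    |-(phiE B W₂ s)| ≤ 2 * (unif W₁ s + unif W₂ s) := by
  rw [abs_neg]
  linarith [abs_phiE_le B (hsol.2.1.bddAbove_abs_image_Icc s) hs, unif_nonneg W₁ s]

theorem unif_fst_le (hsol : IsAuxSolution B b₁ b₂ y₁ y₂ W₁ W₂)
    (hK : ∀ u ∈ Icc 0 s, |b₁ + y₁ u| ≤ K) (hs : 0 ≤ s) :
    unif W₁ s ≤ K + 2 * ∫ u in 0..s, (unif W₁ u + unif W₂ u) := by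
  rw [← intervalIntegral.integral_const_mul]
  refine unif_le hs fun u hu => ?_
  rw [hsol.2.2.1 u hu.1]
  exact (abs_add_le _ _).trans <| add_le_add (hK u hu) <| abs_integral_le_integral_of_abs_le
    (((hsol.monotoneOn_unif_add s).mono (uIcc_of_le hs).le).intervalIntegrable.const_mul 2)
    (fun v hv => hsol.abs_drift_fst_le hv.1) hu

theorem unif_snd_le (hsol : IsAuxSolution B b₁ b₂ y₁ y₂ W₁ W₂)
    (hK : ∀ u ∈ Icc 0 s, |b₂ + y₂ u| ≤ K) (hs : 0 ≤ s) :
    unif W₂ s ≤ K + unif W₁ s + 2 * ∫ u in 0..s, (unif W₁ u + unif W₂ u) := by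
  have hW₁ := hsol.1.bddAbove_abs_image_Icc s
  rw [← intervalIntegral.integral_const_mul]
  refine unif_le hs fun u hu => ?_
  have hψ : |psiR 0 W₁ u| ≤ unif W₁ s := by
    rw [abs_of_nonneg (psiR_nonneg 0 W₁ u)]
    exact (psiR_le_unif le_rfl (hW₁.mono (image_mono (Icc_subset_Icc_right hu.2))) hu.1).trans
      (unif_monotoneOn hW₁ hu ⟨hs, le_rfl⟩ hu.2)
  rw [hsol.2.2.2.1 u hu.1]
  refine (abs_add_le _ _).trans <|
    add_le_add ((abs_add_le _ _).trans (add_le_add (hK u hu) hψ)) <|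
    abs_integral_le_integral_of_abs_le
    (((hsol.monotoneOn_unif_add s).mono (uIcc_of_le hs).le).intervalIntegrable.const_mul 2)
    (fun v hv => hsol.abs_drift_snd_le hv.1) hu

theorem unif_add_unif_le (hsol : IsAuxSolution B b₁ b₂ y₁ y₂ W₁ W₂)
    (hK₁ : ∀ u ∈ Icc 0 t, |b₁ + y₁ u| ≤ K) (hK₂ : ∀ u ∈ Icc 0 t, |b₂ + y₂ u| ≤ K) :
    ∀ s ∈ Icc 0 t, unif W₁ s + unif W₂ s ≤ 3 * K * Real.exp (6 * s) := by
  have := (hsol.monotoneOn_unif_add t).le_mul_exp_of_le_add_mul_integral (δ := 3 * K)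
    (by norm_num : (0:ℝ) ≤ 6) fun s hs => ?_
  · simpa only [sub_zero] using this
  have h₁ := hsol.unif_fst_le (fun u hu => hK₁ u ⟨hu.1, hu.2.trans hs.2⟩) hs.1
  have h₂ := hsol.unif_snd_le (fun u hu => hK₂ u ⟨hu.1, hu.2.trans hs.2⟩) hs.1
  linarith

theorem two_mul_integral_unif_add_le (hsol : IsAuxSolution B b₁ b₂ y₁ y₂ W₁ W₂)
    (hK₁ : ∀ u ∈ Icc 0 t, |b₁ + y₁ u| ≤ K) (hK₂ : ∀ u ∈ Icc 0 t, |b₂ + y₂ u| ≤ K) (ht : 0 ≤ t) :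
    2 * ∫ u in 0..t, (unif W₁ u + unif W₂ u) ≤ K * (Real.exp (6 * t) - 1) := by
  have hexp : ∫ u in 0..t, Real.exp (6 * u) = (Real.exp (6 * t) - 1) / 6 := by
    rw [intervalIntegral.integral_comp_mul_left (fun u => Real.exp u) (by norm_num : (6:ℝ) ≠ 0),
      integral_exp]
    simp [div_eq_inv_mul]
  calc 2 * ∫ u in 0..t, (unif W₁ u + unif W₂ u)
      ≤ 2 * ∫ u in 0..t, 3 * K * Real.exp (6 * u) := by
        gcongr
        exact intervalIntegral.integral_mono_on ht
          ((hsol.monotoneOn_unif_add t).mono (uIcc_of_le ht).le).intervalIntegrable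
          (Continuous.intervalIntegrable (by fun_prop) 0 t)
          (hsol.unif_add_unif_le hK₁ hK₂)
    _ = K * (Real.exp (6 * t) - 1) := by
        rw [intervalIntegral.integral_const_mul, hexp]
        ring

end IsAuxSolution

/-- **A priori bound for the unreflected auxiliary system:** if `W = (W₁,W₂)`
solves the system with data `(B, b, y)`, then for every `t ≥ 0`, with
`K = |b| + ‖y‖_t`, one has `‖W₁‖_t ≤ 2Ke^{6t}` and `‖W₂‖_t ≤ 4Ke^{6t}`. -/
theorem aux_system_apriori_bound
    (B : ℝ≥0∞) (b₁ b₂ : ℝ) (y₁ y₂ : ℝ → ℝ) (hy₁ : Cadlag y₁) (hy₂ : Cadlag y₂)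
    (W₁ W₂ : ℝ → ℝ) (hsol : IsAuxSolution B b₁ b₂ y₁ y₂ W₁ W₂)
    (t : ℝ) (ht : 0 ≤ t) :
    unif W₁ t ≤ 2 * (max |b₁| |b₂| + max (unif y₁ t) (unif y₂ t)) * Real.exp (6 * t) ∧
    unif W₂ t ≤ 4 * (max |b₁| |b₂| + max (unif y₁ t) (unif y₂ t)) * Real.exp (6 * t) := by
  set K := max |b₁| |b₂| + max (unif y₁ t) (unif y₂ t)
  have hK₁ : ∀ u ∈ Icc 0 t, |b₁ + y₁ u| ≤ K := fun u hu =>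
    (abs_add_le _ _).trans <| add_le_add (le_max_left _ _)
      ((abs_le_unif (hy₁.bddAbove_abs_image_Icc t) hu).trans (le_max_left _ _))
  have hK₂ : ∀ u ∈ Icc 0 t, |b₂ + y₂ u| ≤ K := fun u hu =>
    (abs_add_le _ _).trans <| add_le_add (le_max_right _ _)
      ((abs_le_unif (hy₂.bddAbove_abs_image_Icc t) hu).trans (le_max_right _ _))
  have hKexp : 0 ≤ K * Real.exp (6 * t) :=
    mul_nonneg ((abs_nonneg _).trans (hK₁ 0 ⟨le_rfl, ht⟩)) (Real.exp_pos _).le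
  have hint := hsol.two_mul_integral_unif_add_le hK₁ hK₂ ht
  have h₁ := hsol.unif_fst_le hK₁ ht
  have h₂ := hsol.unif_snd_le hK₂ ht
  constructor <;> linarith
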